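/- Let H be d×d positive definite, h ∈ R^d, u ∈ R^d with ‖u‖₂ ≤ 1, ‖h‖₂ ≤ 1, β > 0, and suppose H ⪰ βI. For 𝐔 = [[U+uu^T, u],[u^T, 1]] with U positive semi-definite, and 𝚺 = [[H+hh^T, h],[h^T, 1+β]], we have tr(𝐔 𝚺^{-1}) ≥ (1/4)‖u−h‖²_{H^{-1}} − 1/4. -/

import Mathlib

/-!
Test the trace against the vector `x = (w, -hᵀw)` with `w = H⁻¹(u - h)`. For positive semidefinite
`A` and positive definite `S` one has `xᵀAx ≤ tr(A S⁻¹) · xᵀSx`, and for this `x` the two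
quadratic forms are `xᵀ𝐔x ≥ q²` and `xᵀ𝚺x = q + β (hᵀw)²` with `q = ‖u - h‖²_{H⁻¹}`.
Cauchy–Schwarz in the `H⁻¹` inner product together with `‖h‖²_{H⁻¹} ≤ ‖h‖²/β ≤ 1/β` gives
`β (hᵀw)² ≤ q`, hence `tr(𝐔𝚺⁻¹) ≥ q / 2`.
-/

open Matrix

namespace Matrix

variable {n : Type*}

lemma exists_eq_sumElim_const {α : Type*} (x : n ⊕ Fin 1 → α) :
    ∃ w t, x = Sum.elim w (fun _ => t) :=
  ⟨x ∘ Sum.inl, x (Sum.inr 0), by ext (i | i) <;> simp [Fin.fin_one_eq_zero]⟩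

variable [Fintype n]

lemma IsHermitian.dotProduct_mulVec_comm {A : Matrix n n ℝ} (hA : A.IsHermitian) (x y : n → ℝ) :
    y ⬝ᵥ A *ᵥ x = x ⬝ᵥ A *ᵥ y := by
  rw [dotProduct_mulVec, ← mulVec_transpose, ← conjTranspose_eq_transpose_of_trivial, hA.eq,
    dotProduct_comm]

lemma PosSemidef.dotProduct_mulVec_sq_le {A : Matrix n n ℝ} (hA : A.PosSemidef) (x y : n → ℝ) :
    (x ⬝ᵥ A *ᵥ y) ^ 2 ≤ (x ⬝ᵥ A *ᵥ x) * (y ⬝ᵥ A *ᵥ y) := by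
  have hquad : ∀ t : ℝ,
      0 ≤ (y ⬝ᵥ A *ᵥ y) * (t * t) + 2 * (x ⬝ᵥ A *ᵥ y) * t + x ⬝ᵥ A *ᵥ x := fun t => by
    have := hA.dotProduct_mulVec_nonneg (x + t • y)
    simp only [star_trivial, mulVec_add, mulVec_smul, add_dotProduct, dotProduct_add,
      smul_dotProduct, dotProduct_smul, hA.isHermitian.dotProduct_mulVec_comm x y,
      smul_eq_mul] at this
    linarith
  have := discrim_le_zero hquad
  rw [discrim] at this
  linarith

/-- In the notation of the theorem, `𝐔 = liftedMatrix U u 1` and `𝚺 = liftedMatrix H h (1 + β)`. -/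
def liftedMatrix (A : Matrix n n ℝ) (v : n → ℝ) (c : ℝ) : Matrix (n ⊕ Fin 1) (n ⊕ Fin 1) ℝ :=
  fromBlocks (A + vecMulVec v v) (replicateCol (Fin 1) v) (replicateRow (Fin 1) v) (c • 1)

lemma IsHermitian.liftedMatrix {A : Matrix n n ℝ} (hA : A.IsHermitian) (v : n → ℝ) (c : ℝ) :
    (liftedMatrix A v c).IsHermitian := by
  have hvv := (posSemidef_vecMulVec_self_star v).isHermitian
  rw [star_trivial] at hvv
  refine IsHermitian.fromBlocks (hA.add hvv) ?_ ?_
  · simp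
  · exact isHermitian_one.smul (.all c)

lemma dotProduct_liftedMatrix_mulVec (A : Matrix n n ℝ) (v : n → ℝ) (c : ℝ) (w : n → ℝ) (t : ℝ) :
    Sum.elim w (fun _ => t) ⬝ᵥ liftedMatrix A v c *ᵥ Sum.elim w (fun _ => t)
      = w ⬝ᵥ A *ᵥ w + (c - 1) * t ^ 2 + (v ⬝ᵥ w + t) ^ 2 := by
  have hcol : replicateCol (Fin 1) v *ᵥ (fun _ => t) = t • v := by
    ext; simp [mulVec, dotProduct, mul_comm]
  have hrow : replicateRow (Fin 1) v *ᵥ w = fun _ => v ⬝ᵥ w := rfl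
  have hdot : ∀ s : ℝ, (fun _ => t : Fin 1 → ℝ) ⬝ᵥ (fun _ => s) = t * s := by simp [dotProduct]
  simp only [liftedMatrix, fromBlocks_mulVec, Sum.elim_comp_inl, Sum.elim_comp_inr, add_mulVec,
    vecMulVec_mulVec, op_smul_eq_smul, hcol, hrow, smul_mulVec, one_mulVec,
    sumElim_dotProduct_sumElim, dotProduct_add, dotProduct_smul, dotProduct_comm w v, smul_eq_mul,
    hdot]
  ring

lemma PosSemidef.liftedMatrix {A : Matrix n n ℝ} (hA : A.PosSemidef) (v : n → ℝ) {c : ℝ}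
    (hc : 1 ≤ c) : (liftedMatrix A v c).PosSemidef := by
  refine .of_dotProduct_mulVec_nonneg (hA.isHermitian.liftedMatrix v c) fun x => ?_
  obtain ⟨w, t, rfl⟩ := exists_eq_sumElim_const x
  have hAw := hA.dotProduct_mulVec_nonneg w
  rw [star_trivial] at hAw ⊢
  rw [dotProduct_liftedMatrix_mulVec]
  have : 0 ≤ (c - 1) * t ^ 2 := mul_nonneg (by linarith) (sq_nonneg t)
  linarith [sq_nonneg (v ⬝ᵥ w + t)]

lemma PosDef.liftedMatrix {A : Matrix n n ℝ} (hA : A.PosDef) (v : n → ℝ) {c : ℝ}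
    (hc : 1 ≤ c) : (liftedMatrix A v c).PosDef := by
  refine .of_dotProduct_mulVec_pos (hA.isHermitian.liftedMatrix v c) fun x hx => ?_
  obtain ⟨w, t, rfl⟩ := exists_eq_sumElim_const x
  rw [star_trivial, dotProduct_liftedMatrix_mulVec]
  have hct : 0 ≤ (c - 1) * t ^ 2 := mul_nonneg (by linarith) (sq_nonneg t)
  by_cases hw : w = 0
  · have ht : t ≠ 0 := by rintro rfl; exact hx (by ext (i | i) <;> simp [hw])
    simp only [hw, mulVec_zero, dotProduct_zero, zero_add]
    linarith [sq_pos_of_ne_zero ht]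
  · have hAw := hA.dotProduct_mulVec_pos hw
    rw [star_trivial] at hAw
    linarith [sq_nonneg (v ⬝ᵥ w + t)]

variable [DecidableEq n]

open scoped MatrixOrder ComplexOrder in
lemma PosSemidef.trace_mul_nonneg {𝕜 : Type*} [RCLike 𝕜] {A B : Matrix n n 𝕜}
    (hA : A.PosSemidef) (hB : B.PosSemidef) : 0 ≤ (A * B).trace := by
  obtain ⟨C, rfl⟩ := CStarAlgebra.nonneg_iff_eq_star_mul_self.mp hA.nonneg
  rw [Matrix.mul_assoc, trace_mul_comm]
  exact (hB.mul_mul_conjTranspose_same C).trace_nonneg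

lemma PosDef.mulVec_inv_mulVec {S : Matrix n n ℝ} (hS : S.PosDef) (y : n → ℝ) :
    S *ᵥ (S⁻¹ *ᵥ y) = y := by
  rw [mulVec_mulVec, mul_nonsing_inv _ ((isUnit_iff_isUnit_det S).mp hS.isUnit), one_mulVec]

/-- The gap is `tr(A M)` with `M = (xᵀSx) S⁻¹ - x xᵀ`, and `M ⪰ 0` is Cauchy–Schwarz for the
inner product of `S`. -/
lemma PosSemidef.dotProduct_mulVec_le_trace_mul_inv {A S : Matrix n n ℝ} (hA : A.PosSemidef)
    (hS : S.PosDef) (x : n → ℝ) : x ⬝ᵥ A *ᵥ x ≤ (A * S⁻¹).trace * (x ⬝ᵥ S *ᵥ x) := by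
  have hM : ((x ⬝ᵥ S *ᵥ x) • S⁻¹ - vecMulVec x x).PosSemidef := by
    refine .of_dotProduct_mulVec_nonneg ?_ fun y => ?_
    · have hxx := (posSemidef_vecMulVec_self_star x).isHermitian
      rw [star_trivial] at hxx
      exact (hS.inv.isHermitian.smul (.all _)).sub hxx
    · have hcs := hS.posSemidef.dotProduct_mulVec_sq_le x (S⁻¹ *ᵥ y)
      rw [hS.mulVec_inv_mulVec, dotProduct_comm (S⁻¹ *ᵥ y)] at hcs
      simp only [star_trivial, sub_mulVec, smul_mulVec, vecMulVec_mulVec, op_smul_eq_smul,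
        dotProduct_sub, dotProduct_smul, smul_eq_mul, sub_nonneg]
      rw [dotProduct_comm y x, ← sq]
      exact hcs
  have := hA.trace_mul_nonneg hM
  rw [Matrix.mul_sub, trace_sub, mul_smul_comm, trace_smul, mul_vecMulVec, trace_vecMulVec,
    smul_eq_mul, dotProduct_comm (A *ᵥ x)] at this
  linarith

lemma PosDef.mul_dotProduct_inv_mulVec_le {H : Matrix n n ℝ} (hH : H.PosDef) {β : ℝ}
    (hHβ : (H - β • 1).PosSemidef) (h : n → ℝ) : β * (h ⬝ᵥ H⁻¹ *ᵥ h) ≤ h ⬝ᵥ h := by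
  set y := H⁻¹ *ᵥ h
  have hHy : H *ᵥ y = h := hH.mulVec_inv_mulVec h
  have hp : 0 ≤ h ⬝ᵥ y := by
    simpa [hHy, dotProduct_comm] using hH.posSemidef.dotProduct_mulVec_nonneg y
  have hyy : β * (y ⬝ᵥ y) ≤ h ⬝ᵥ y := by
    have := hHβ.dotProduct_mulVec_nonneg y
    rw [star_trivial, sub_mulVec, smul_mulVec, one_mulVec, dotProduct_sub, dotProduct_smul, hHy,
      dotProduct_comm y h, smul_eq_mul] at this
    linarith
  have hcs : (h ⬝ᵥ y) ^ 2 ≤ (h ⬝ᵥ h) * (y ⬝ᵥ y) := by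
    simpa using PosSemidef.one.dotProduct_mulVec_sq_le h y
  have hhh : 0 ≤ h ⬝ᵥ h := by simpa using dotProduct_self_star_nonneg h
  rcases hp.eq_or_lt with hp0 | hp0
  · rwa [← hp0, mul_zero]
  rcases le_or_gt β 0 with hβ | hβ
  · nlinarith
  · refine le_of_mul_le_mul_right ?_ hp0
    nlinarith [mul_le_mul_of_nonneg_left hcs hβ.le, mul_le_mul_of_nonneg_left hyy hhh]

lemma sq_le_trace_liftedMatrix_mul_inv {H U : Matrix n n ℝ} (hU : U.PosSemidef) (hH : H.PosDef)
    {β : ℝ} (hβ : 0 ≤ β) (u h : n → ℝ) :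
    ((u - h) ⬝ᵥ H⁻¹ *ᵥ (u - h)) ^ 2 ≤ (liftedMatrix U u 1 * (liftedMatrix H h (1 + β))⁻¹).trace *
      ((u - h) ⬝ᵥ H⁻¹ *ᵥ (u - h) + β * (h ⬝ᵥ H⁻¹ *ᵥ (u - h)) ^ 2) := by
  set w := H⁻¹ *ᵥ (u - h)
  set x : n ⊕ Fin 1 → ℝ := Sum.elim w (fun _ => -(h ⬝ᵥ w))
  have hUx : ((u - h) ⬝ᵥ w) ^ 2 ≤ x ⬝ᵥ liftedMatrix U u 1 *ᵥ x := by
    have hUw := hU.dotProduct_mulVec_nonneg w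
    rw [star_trivial] at hUw
    rw [dotProduct_liftedMatrix_mulVec, sub_dotProduct]
    nlinarith
  have hHx : x ⬝ᵥ liftedMatrix H h (1 + β) *ᵥ x = (u - h) ⬝ᵥ w + β * (h ⬝ᵥ w) ^ 2 := by
    rw [dotProduct_liftedMatrix_mulVec, hH.mulVec_inv_mulVec, dotProduct_comm w]
    ring
  calc ((u - h) ⬝ᵥ w) ^ 2 ≤ x ⬝ᵥ liftedMatrix U u 1 *ᵥ x := hUx
    _ ≤ _ := (hU.liftedMatrix u le_rfl).dotProduct_mulVec_le_trace_mul_inv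
          (hH.liftedMatrix h (le_add_of_nonneg_right hβ)) x
    _ = _ := by rw [hHx]

end Matrix

theorem lifted_trace_quarter_bound_general {d : ℕ} (H U : Matrix (Fin d) (Fin d) ℝ)
    (u h : Fin d → ℝ) (β : ℝ) (hβ : 0 < β)
    (hH : H.PosDef) (hHβ : (H - β • (1 : Matrix (Fin d) (Fin d) ℝ)).PosSemidef)
    (hU : U.PosSemidef) (hh : h ⬝ᵥ h ≤ 1) :
    (1 / 4) * ((u - h) ⬝ᵥ (H⁻¹ *ᵥ (u - h))) - 1 / 4
      ≤ ((fromBlocks (U + vecMulVec u u) (replicateCol (Fin 1) u) (replicateRow (Fin 1) u)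
            (1 : Matrix (Fin 1) (Fin 1) ℝ)) *
         (fromBlocks (H + vecMulVec h h) (replicateCol (Fin 1) h) (replicateRow (Fin 1) h)
            ((1 + β) • (1 : Matrix (Fin 1) (Fin 1) ℝ)))⁻¹).trace := by
  nth_rw 1 [← one_smul ℝ (1 : Matrix (Fin 1) (Fin 1) ℝ)]
  change _ ≤ (liftedMatrix U u 1 * (liftedMatrix H h (1 + β))⁻¹).trace
  set q := (u - h) ⬝ᵥ H⁻¹ *ᵥ (u - h)
  set a := h ⬝ᵥ H⁻¹ *ᵥ (u - h)
  have hq : 0 ≤ q := by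
    simpa only [star_trivial] using hH.inv.posSemidef.dotProduct_mulVec_nonneg (u - h)
  have hβa : β * a ^ 2 ≤ q := by
    have hcs := hH.inv.posSemidef.dotProduct_mulVec_sq_le h (u - h)
    have hp := hH.mul_dotProduct_inv_mulVec_le hHβ h
    have hp0 : 0 ≤ h ⬝ᵥ H⁻¹ *ᵥ h := by
      simpa only [star_trivial] using hH.inv.posSemidef.dotProduct_mulVec_nonneg h
    nlinarith [mul_le_mul_of_nonneg_left hcs hβ.le]
  have hT := (hU.liftedMatrix u le_rfl).trace_mul_nonneg
    (hH.liftedMatrix h (le_add_of_nonneg_right hβ.le)).inv.posSemidef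
  have hsq := sq_le_trace_liftedMatrix_mul_inv hU hH hβ.le u h
  nlinarith [mul_le_mul_of_nonneg_left hβa hT]

theorem lifted_trace_quarter_bound {d : ℕ} (H U : Matrix (Fin d) (Fin d) ℝ)
    (u h : Fin d → ℝ) (β : ℝ) (hβ : 0 < β)
    (hH : H.PosDef) (hHβ : (H - β • (1 : Matrix (Fin d) (Fin d) ℝ)).PosSemidef)
    (hU : U.PosSemidef) (hu : u ⬝ᵥ u ≤ 1) (hh : h ⬝ᵥ h ≤ 1) :
    (1 / 4) * ((u - h) ⬝ᵥ (H⁻¹ *ᵥ (u - h))) - 1 / 4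
      ≤ ((fromBlocks (U + vecMulVec u u) (replicateCol (Fin 1) u) (replicateRow (Fin 1) u)
            (1 : Matrix (Fin 1) (Fin 1) ℝ)) *
         (fromBlocks (H + vecMulVec h h) (replicateCol (Fin 1) h) (replicateRow (Fin 1) h)
            ((1 + β) • (1 : Matrix (Fin 1) (Fin 1) ℝ)))⁻¹).trace :=
  lifted_trace_quarter_bound_general H U u h β hβ hH hHβ hU hh
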